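/- arXiv:quant-ph/0608026 — 8 statements merged into one kernel-verified Lean document; each statement's English description precedes it below -/
import Mathlib

section
/- Every singular value of the discriminant matrix D(P) lies in the interval [0,1]. Equivalently, D(P) is a contraction in Euclidean norm: for every vector v : X → ℝ one has ‖D(P) · v‖ ≤ ‖v‖, where ‖·‖ is the Euclidean norm and D(P) · v denotes matrix-vector multiplication. -/
/-!
Substituting `v = √π · u` turns `‖D v‖²` into `∑ₓ πₓ (P u)ₓ²` and `‖v‖²` into `∑ₓ πₓ uₓ²`,
so the claim is that `P` is a contraction of `L²(π)`. Each row of `P` is a probability vector,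
so Jensen gives `(P u)ₓ² ≤ (P u²)ₓ`, and stationarity `π P = π` sums the right-hand side
against `π` to `∑ₓ πₓ uₓ²`.
-/

open Finset Matrix

lemma sq_mulVec_le_mulVec_sq {X : Type*} [Fintype X] {P : Matrix X X ℝ}
    (hP_nonneg : ∀ x y, 0 ≤ P x y) (hP_row : ∀ x, ∑ y, P x y = 1) (u : X → ℝ) (x : X) :
    (P *ᵥ u) x ^ 2 ≤ (P *ᵥ (u ^ 2)) x := by
  simpa [mulVec, dotProduct] using
    (even_two.convexOn_pow (𝕜 := ℝ)).map_sum_le (t := univ) (w := P x) (p := u)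
      (fun y _ => hP_nonneg x y) (hP_row x) (fun _ _ => Set.mem_univ _)

lemma sum_mul_sq_mulVec_le_of_vecMul_eq {X : Type*} [Fintype X] {P : Matrix X X ℝ}
    {pi : X → ℝ} (hP_nonneg : ∀ x y, 0 ≤ P x y) (hP_row : ∀ x, ∑ y, P x y = 1)
    (hpi_nonneg : ∀ x, 0 ≤ pi x) (hpi_stat : pi ᵥ* P = pi) (u : X → ℝ) :
    ∑ x, pi x * (P *ᵥ u) x ^ 2 ≤ ∑ x, pi x * u x ^ 2 :=
  calc ∑ x, pi x * (P *ᵥ u) x ^ 2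
      ≤ pi ⬝ᵥ (P *ᵥ (u ^ 2)) :=
        sum_le_sum fun x _ =>
          mul_le_mul_of_nonneg_left (sq_mulVec_le_mulVec_sq hP_nonneg hP_row u x) (hpi_nonneg x)
    _ = ∑ x, pi x * u x ^ 2 := by rw [dotProduct_mulVec, hpi_stat]; rfl

lemma discriminant_mulVec {X : Type*} [Fintype X] {P D : Matrix X X ℝ} {pi : X → ℝ}
    (hD : ∀ x y, D x y = √(pi x) * P x y / √(pi y)) (v : X → ℝ) (x : X) :
    (D *ᵥ v) x = √(pi x) * (P *ᵥ fun y => v y / √(pi y)) x := by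
  simp only [mulVec, dotProduct, hD, mul_sum]
  exact sum_congr rfl fun y _ => by ring

theorem discriminant_contraction_general {X : Type*} [Fintype X]
    (P : Matrix X X ℝ) (pi : X → ℝ)
    (hP_nonneg : ∀ x y, 0 ≤ P x y)
    (hP_row : ∀ x, ∑ y, P x y = 1)
    (hpi_pos : ∀ x, 0 < pi x)
    (hpi_stat : ∀ y, ∑ x, pi x * P x y = pi y)
    (D : Matrix X X ℝ)
    (hD : ∀ x y, D x y = Real.sqrt (pi x) * P x y / Real.sqrt (pi y))
    (v : X → ℝ) :
    Real.sqrt (∑ x, (∑ y, D x y * v y) ^ 2) ≤ Real.sqrt (∑ x, (v x) ^ 2) := by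
  apply Real.sqrt_le_sqrt
  set u : X → ℝ := fun y => v y / √(pi y)
  have hsqrt_sq (x : X) : √(pi x) ^ 2 = pi x := Real.sq_sqrt (hpi_pos x).le
  calc ∑ x, (D *ᵥ v) x ^ 2
      = ∑ x, pi x * (P *ᵥ u) x ^ 2 :=
        sum_congr rfl fun x _ => by rw [discriminant_mulVec hD, mul_pow, hsqrt_sq]
    _ ≤ ∑ x, pi x * u x ^ 2 :=
        sum_mul_sq_mulVec_le_of_vecMul_eq hP_nonneg hP_row (fun x => (hpi_pos x).le)
          (funext hpi_stat) u
    _ = ∑ x, v x ^ 2 :=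
        sum_congr rfl fun x _ => by
          rw [div_pow, hsqrt_sq, mul_div_cancel₀ _ (hpi_pos x).ne']

/-- The discriminant matrix `D(P)` of a row-stochastic matrix `P`
with stationary distribution `π` is a contraction in Euclidean norm:
for every `v : X → ℝ`, `‖D(P) · v‖ ≤ ‖v‖`. -/
theorem discriminant_contraction {X : Type*} [Fintype X] [Nonempty X]
    (P : Matrix X X ℝ) (pi : X → ℝ)
    (hP_nonneg : ∀ x y, 0 ≤ P x y)
    (hP_row : ∀ x, ∑ y, P x y = 1)
    (hpi_pos : ∀ x, 0 < pi x)
    (hpi_sum : ∑ x, pi x = 1)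
    (hpi_stat : ∀ y, ∑ x, pi x * P x y = pi y)
    (D : Matrix X X ℝ)
    (hD : ∀ x y, D x y = Real.sqrt (pi x) * P x y / Real.sqrt (pi y))
    (v : X → ℝ) :
    Real.sqrt (∑ x, (∑ y, D x y * v y) ^ 2) ≤ Real.sqrt (∑ x, (v x) ^ 2) :=
  discriminant_contraction_general P pi hP_nonneg hP_row hpi_pos hpi_stat D hD v
end

section
/- Suppose in addition that P is irreducible (for all x, y ∈ X there exists k ∈ ℕ with (P^k)_{xy} > 0) and that p_{xx} > 0 for every x ∈ X. If u, w : X → ℂ are unit vectors (Euclidean norm 1) satisfying Σ_{x,y} conj(u_x) · D(P)_{xy} · w_y = 1, then there exists a complex number c with |c| = 1 such that u_x = c·√(π_x) and w_x = c·√(π_x) for every x ∈ X. In particular the singular value 1 of D(P) has multiplicity one. -/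
/-!
Write `u = √π · a` and `w = √π · b`. Against the edge measure `Q(x, y) = π(x) P(x, y)`, row sums
and stationarity turn the normalisations into `∑ Q |a_x|² = ∑ Q |b_y|² = 1`, and the hypothesis
reads `∑ Q conj(a_x) b_y = 1`. Hence `∑ Q |a_x - b_y|² = 0`, so `a_x = b_y` along every edge of
`P`. The loops give `a = b`, so `a` is constant along edges and, by irreducibility, constant; the
normalisation makes the constant unimodular.
-/

open ComplexConjugate

theorem Matrix.apply_eq_of_pow_apply_pos {n R α : Type*} [Fintype n] [DecidableEq n] [Ring R]
    [LinearOrder R] [IsOrderedRing R] [PosMulStrictMono R] [Nontrivial R] {A : Matrix n n R}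
    (hA : ∀ i j, 0 ≤ A i j) {f : n → α} (hf : ∀ i j, 0 < A i j → f i = f j) {k : ℕ} {i j : n}
    (h : 0 < (A ^ k) i j) : f i = f j := by
  let := toQuiver A
  obtain ⟨p, -⟩ := (pow_apply_pos_iff_nonempty_path hA k i j).1 h
  clear h
  induction p with
  | nil => rfl
  | cons _ e ih => exact ih.trans (hf _ _ e.down)

theorem Complex.norm_sub_sq (a b : ℂ) :
    ‖a - b‖ ^ 2 = ‖a‖ ^ 2 + ‖b‖ ^ 2 - 2 * (conj a * b).re := by
  have := _root_.norm_sub_sq (𝕜 := ℂ) a b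
  rw [RCLike.inner_apply, mul_comm b] at this
  simp only [RCLike.re_to_complex] at this
  linarith

theorem Complex.eq_of_sum_mul_conj_mul_eq {ι : Type*} [Fintype ι] {m : ι → ℝ} {a b : ι → ℂ}
    {r : ℝ} (hm : ∀ i, 0 ≤ m i) (ha : ∑ i, m i * ‖a i‖ ^ 2 = r)
    (hb : ∑ i, m i * ‖b i‖ ^ 2 = r) (hab : ∑ i, (m i : ℂ) * (conj (a i) * b i) = r) {i : ι}
    (hi : 0 < m i) : a i = b i := by
  have hre : ∑ i, m i * (conj (a i) * b i).re = r := by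
    simpa only [Complex.re_sum, Complex.re_ofReal_mul, Complex.ofReal_re] using
      congrArg Complex.re hab
  have hsum : ∑ i, m i * ‖a i - b i‖ ^ 2 = 0 := by
    simp only [Complex.norm_sub_sq, mul_sub, mul_add, Finset.sum_sub_distrib,
      Finset.sum_add_distrib, mul_left_comm _ (2 : ℝ), ← Finset.mul_sum, ha, hb, hre]
    ring
  have := (Finset.sum_eq_zero_iff_of_nonneg fun j _ => mul_nonneg (hm j) (sq_nonneg _)).1 hsum i
    (Finset.mem_univ i)
  simpa [hi.ne', sub_eq_zero] using this

section EdgeMeasure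

variable {X : Type*} [Fintype X]

def edgeMeasure (pi : X → ℝ) (P : Matrix X X ℝ) (e : X × X) : ℝ := pi e.1 * P e.1 e.2

theorem sum_edgeMeasure_mul_fst {P : Matrix X X ℝ} (hP_row : ∀ x, ∑ y, P x y = 1)
    (pi f : X → ℝ) : ∑ e, edgeMeasure pi P e * f e.1 = ∑ x, pi x * f x := by
  simp only [edgeMeasure, Fintype.sum_prod_type, mul_right_comm _ _ (f _), ← Finset.mul_sum,
    hP_row, mul_one]

theorem sum_edgeMeasure_mul_snd {P : Matrix X X ℝ} {pi : X → ℝ}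
    (hpi_stat : ∀ y, ∑ x, pi x * P x y = pi y) (f : X → ℝ) :
    ∑ e, edgeMeasure pi P e * f e.2 = ∑ y, pi y * f y := by
  simp only [edgeMeasure, Fintype.sum_prod_type_right, ← Finset.sum_mul, hpi_stat]

theorem sum_conj_mul_discriminant_mul {P D : Matrix X X ℝ} {pi : X → ℝ}
    (hpi_pos : ∀ x, 0 < pi x)
    (hD : ∀ x y, D x y = Real.sqrt (pi x) * P x y / Real.sqrt (pi y)) (a b : X → ℂ) :
    ∑ x, ∑ y, conj (Real.sqrt (pi x) * a x) * D x y * (Real.sqrt (pi y) * b y) =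
      ∑ e, (edgeMeasure pi P e : ℂ) * (conj (a e.1) * b e.2) := by
  rw [Fintype.sum_prod_type]
  refine Finset.sum_congr rfl fun x _ => Finset.sum_congr rfl fun y _ => ?_
  have hy : (Real.sqrt (pi y) : ℂ) ≠ 0 := by exact_mod_cast (Real.sqrt_pos.2 (hpi_pos y)).ne'
  have hx : (Real.sqrt (pi x) : ℂ) ^ 2 = pi x := by exact_mod_cast Real.sq_sqrt (hpi_pos x).le
  simp only [edgeMeasure, hD, map_mul, Complex.conj_ofReal, Complex.ofReal_mul,
    Complex.ofReal_div]
  field_simp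
  rw [hx]
  ring

end EdgeMeasure

/-- For an irreducible row-stochastic matrix `P` with `P x x > 0`
for all `x`, if unit vectors `u, w : X → ℂ` satisfy `∑ x y, conj (u x) * D x y * w y = 1`,
then there is a unimodular `c : ℂ` with `u x = c • √(π x)` and `w x = c • √(π x)` for all `x`. -/
theorem discriminant_singular_value_one_unique {X : Type*} [Fintype X] [DecidableEq X] [Nonempty X]
    (P : Matrix X X ℝ) (pi : X → ℝ)
    (hP_nonneg : ∀ x y, 0 ≤ P x y)
    (hP_row : ∀ x, ∑ y, P x y = 1)
    (hpi_pos : ∀ x, 0 < pi x)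
    (hpi_sum : ∑ x, pi x = 1)
    (hpi_stat : ∀ y, ∑ x, pi x * P x y = pi y)
    (D : Matrix X X ℝ)
    (hD : ∀ x y, D x y = Real.sqrt (pi x) * P x y / Real.sqrt (pi y))
    (hirr : ∀ x y, ∃ k : ℕ, 0 < (P ^ k) x y)
    (hloops : ∀ x, 0 < P x x)
    (u w : X → ℂ)
    (hu : ∑ x, ‖u x‖ ^ 2 = 1)
    (hw : ∑ x, ‖w x‖ ^ 2 = 1)
    (h1 : ∑ x, ∑ y, (starRingEnd ℂ) (u x) * (D x y : ℂ) * w y = 1) :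
    ∃ c : ℂ, ‖c‖ = 1 ∧
      ∀ x, u x = c * (Real.sqrt (pi x) : ℂ) ∧ w x = c * (Real.sqrt (pi x) : ℂ) := by
  have hscale : ∀ v : X → ℂ, ∃ a : X → ℂ, v = fun x => Real.sqrt (pi x) * a x := fun v =>
    ⟨fun x => v x / Real.sqrt (pi x), funext fun x => (mul_div_cancel₀ _ <| by
      exact_mod_cast (Real.sqrt_pos.2 (hpi_pos x)).ne').symm⟩
  have hnorm (a : X → ℂ) (x : X) : ‖(Real.sqrt (pi x) : ℂ) * a x‖ ^ 2 = pi x * ‖a x‖ ^ 2 := by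
    rw [norm_mul, mul_pow, Complex.norm_real, Real.norm_eq_abs, sq_abs,
      Real.sq_sqrt (hpi_pos x).le]
  obtain ⟨a, rfl⟩ := hscale u
  obtain ⟨b, rfl⟩ := hscale w
  simp only [hnorm] at hu hw
  rw [sum_conj_mul_discriminant_mul hpi_pos hD] at h1
  have hedge (x y : X) (hxy : 0 < P x y) : a x = b y :=
    Complex.eq_of_sum_mul_conj_mul_eq (m := edgeMeasure pi P) (a := fun e => a e.1)
      (b := fun e => b e.2) (i := (x, y))
      (fun e => mul_nonneg (hpi_pos e.1).le (hP_nonneg _ _))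
      ((sum_edgeMeasure_mul_fst hP_row pi _).trans hu)
      ((sum_edgeMeasure_mul_snd hpi_stat _).trans hw) (by exact_mod_cast h1)
      (mul_pos (hpi_pos x) hxy)
  obtain ⟨x₀⟩ := ‹Nonempty X›
  have hconst (x : X) : a x = a x₀ :=
    have ⟨_, hk⟩ := hirr x x₀
    Matrix.apply_eq_of_pow_apply_pos hP_nonneg
      (fun x y hxy => (hedge x y hxy).trans (hedge y y (hloops y)).symm) hk
  refine ⟨a x₀, ?_, fun x => ⟨?_, ?_⟩⟩
  · rw [← pow_eq_one_iff_of_nonneg (norm_nonneg _) two_ne_zero]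
    simpa only [hconst, ← Finset.sum_mul, hpi_sum, one_mul] using hu
  · dsimp only
    rw [hconst, mul_comm]
  · dsimp only
    rw [← hedge x x (hloops x), hconst, mul_comm]
end

section
/- If u, w : X → ℂ are unit vectors (Euclidean norm 1) satisfying Σ_{x,y} conj(u_x) · D(P)_{xy} · w_y = 1, then equality holds in the Cauchy–Schwarz step: for all x, y ∈ X, u_x · √(p_{xy}) = w_y · √(π_x · p_{xy} / π_y). In particular, u_x · √(π_y) = w_y · √(π_x) for every pair x, y with p_{xy} > 0. -/
/-!
Put `a (x, y) = u x * √(p x y)` and `b (x, y) = w y * √(π x p x y / π y)` in `ℓ²(X × X)`.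
Row-stochasticity gives `‖a‖ = ‖u‖ = 1`, stationarity gives `‖b‖ = ‖w‖ = 1`, and
`√(p x y) * √(π x p x y / π y) = D x y`, so `⟪a, b⟫ = ∑ x y, conj (u x) * D x y * w y = 1`.
Equality in Cauchy–Schwarz between unit vectors forces `a = b`.
-/

theorem Real.sqrt_mul_sqrt_mul_div {p s t : ℝ} (hp : 0 ≤ p) (ht : 0 ≤ t) :
    √p * √(s * p / t) = √s * p / √t := by
  rw [← Real.sqrt_mul hp, show p * (s * p / t) = p ^ 2 * (s / t) by ring,
    Real.sqrt_mul (sq_nonneg p), Real.sqrt_sq hp, Real.sqrt_div' _ ht]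
  ring

section Sqrt

variable {𝕜 : Type*} [RCLike 𝕜]

theorem norm_mul_sqrt_sq (z : 𝕜) {r : ℝ} (hr : 0 ≤ r) :
    ‖z * (√r : 𝕜)‖ ^ 2 = ‖z‖ ^ 2 * r := by
  rw [norm_mul, mul_pow, RCLike.norm_ofReal, sq_abs, Real.sq_sqrt hr]

theorem mul_sqrt_eq_of_mul_sqrt_eq_mul_sqrt_div {z z' : 𝕜} {p s t : ℝ} (hp : 0 < p) (hs : 0 ≤ s)
    (ht : 0 < t) (h : z * (√p : 𝕜) = z' * (√(s * p / t) : 𝕜)) :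
    z * (√t : 𝕜) = z' * (√s : 𝕜) := by
  rw [Real.sqrt_div' _ ht.le, Real.sqrt_mul hs] at h
  have hp' : (√p : 𝕜) ≠ 0 := by exact_mod_cast (Real.sqrt_pos.mpr hp).ne'
  have ht' : (√t : 𝕜) ≠ 0 := by exact_mod_cast (Real.sqrt_pos.mpr ht).ne'
  apply mul_right_cancel₀ hp'
  push_cast at h
  rw [mul_right_comm, h]
  field_simp

end Sqrt

theorem eq_of_sum_norm_sq_eq_one_of_sum_conj_mul_eq_one {𝕜 ι : Type*} [RCLike 𝕜] [Fintype ι]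
    {a b : ι → 𝕜} (ha : ∑ i, ‖a i‖ ^ 2 = 1) (hb : ∑ i, ‖b i‖ ^ 2 = 1)
    (hab : ∑ i, starRingEnd 𝕜 (a i) * b i = 1) : a = b := by
  have hnorm (v : ι → 𝕜) (hv : ∑ i, ‖v i‖ ^ 2 = 1) : ‖WithLp.toLp 2 v‖ = 1 := by
    simp [EuclideanSpace.norm_eq, hv]
  have hinner : inner 𝕜 (WithLp.toLp 2 a) (WithLp.toLp 2 b) = 1 := by
    simpa [EuclideanSpace.inner_toLp_toLp, dotProduct, mul_comm] using hab
  exact WithLp.toLp_injective 2 <|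
    (inner_eq_one_iff_of_norm_eq_one (hnorm a ha) (hnorm b hb)).mp hinner

section MarkovKernel

variable {𝕜 X : Type*} [RCLike 𝕜] [Fintype X] {P : Matrix X X ℝ} {pi : X → ℝ}

theorem sum_norm_sq_mul_sqrt_of_row_sum_eq_one (hP : ∀ x y, 0 ≤ P x y)
    (hrow : ∀ x, ∑ y, P x y = 1) (u : X → 𝕜) :
    ∑ i : X × X, ‖u i.1 * (√(P i.1 i.2) : 𝕜)‖ ^ 2 = ∑ x, ‖u x‖ ^ 2 := by
  simp only [norm_mul_sqrt_sq _ (hP _ _), Fintype.sum_prod_type, ← Finset.mul_sum, hrow,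
    mul_one]

theorem sum_norm_sq_mul_sqrt_reversal_of_stationary (hP : ∀ x y, 0 ≤ P x y)
    (hpi : ∀ x, 0 < pi x) (hstat : ∀ y, ∑ x, pi x * P x y = pi y) (w : X → 𝕜) :
    ∑ i : X × X, ‖w i.2 * (√(pi i.1 * P i.1 i.2 / pi i.2) : 𝕜)‖ ^ 2 = ∑ y, ‖w y‖ ^ 2 := by
  have hq (x y : X) : 0 ≤ pi x * P x y / pi y := by
    have := hpi x; have := hpi y; have := hP x y; positivity
  simp only [norm_mul_sqrt_sq _ (hq _ _), Fintype.sum_prod_type_right, ← Finset.mul_sum,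
    ← Finset.sum_div, hstat, div_self (hpi _).ne', mul_one]

end MarkovKernel

theorem discriminant_cauchy_schwarz_equality_general {X : Type*} [Fintype X]
    (P : Matrix X X ℝ) (pi : X → ℝ)
    (hP_nonneg : ∀ x y, 0 ≤ P x y)
    (hP_row : ∀ x, ∑ y, P x y = 1)
    (hpi_pos : ∀ x, 0 < pi x)
    (hpi_stat : ∀ y, ∑ x, pi x * P x y = pi y)
    (D : Matrix X X ℝ)
    (hD : ∀ x y, D x y = Real.sqrt (pi x) * P x y / Real.sqrt (pi y))
    (u w : X → ℂ)
    (hu : ∑ x, ‖u x‖ ^ 2 = 1)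
    (hw : ∑ x, ‖w x‖ ^ 2 = 1)
    (h1 : ∑ x, ∑ y, (starRingEnd ℂ) (u x) * (D x y : ℂ) * w y = 1) :
    (∀ x y, u x * (Real.sqrt (P x y) : ℂ) = w y * (Real.sqrt (pi x * P x y / pi y) : ℂ)) ∧
    (∀ x y, 0 < P x y → u x * (Real.sqrt (pi y) : ℂ) = w y * (Real.sqrt (pi x) : ℂ)) := by
  have hinner : ∑ i : X × X, (starRingEnd ℂ) (u i.1 * (√(P i.1 i.2) : ℂ)) *
      (w i.2 * (√(pi i.1 * P i.1 i.2 / pi i.2) : ℂ)) = 1 := by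
    rw [← h1, Fintype.sum_prod_type]
    refine Finset.sum_congr rfl fun x _ => Finset.sum_congr rfl fun y _ => ?_
    rw [hD, ← Real.sqrt_mul_sqrt_mul_div (hP_nonneg x y) (hpi_pos y).le, map_mul,
      Complex.conj_ofReal]
    push_cast
    ring
  have key := eq_of_sum_norm_sq_eq_one_of_sum_conj_mul_eq_one
    ((sum_norm_sq_mul_sqrt_of_row_sum_eq_one hP_nonneg hP_row u).trans hu)
    ((sum_norm_sq_mul_sqrt_reversal_of_stationary hP_nonneg hpi_pos hpi_stat w).trans hw) hinner
  exact ⟨fun x y => congrFun key (x, y), fun x y hxy =>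
    mul_sqrt_eq_of_mul_sqrt_eq_mul_sqrt_div hxy (hpi_pos x).le (hpi_pos y) (congrFun key (x, y))⟩

/-- If unit vectors `u, w : X → ℂ` satisfy
`∑ x y, conj (u x) * D x y * w y = 1`, then equality holds in the Cauchy–Schwarz step:
`u x * √(p x y) = w y * √(π x * p x y / π y)` for all `x, y`; in particular
`u x * √(π y) = w y * √(π x)` whenever `p x y > 0`. -/
theorem discriminant_cauchy_schwarz_equality {X : Type*} [Fintype X] [Nonempty X]
    (P : Matrix X X ℝ) (pi : X → ℝ)
    (hP_nonneg : ∀ x y, 0 ≤ P x y)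
    (hP_row : ∀ x, ∑ y, P x y = 1)
    (hpi_pos : ∀ x, 0 < pi x)
    (hpi_sum : ∑ x, pi x = 1)
    (hpi_stat : ∀ y, ∑ x, pi x * P x y = pi y)
    (D : Matrix X X ℝ)
    (hD : ∀ x y, D x y = Real.sqrt (pi x) * P x y / Real.sqrt (pi y))
    (u w : X → ℂ)
    (hu : ∑ x, ‖u x‖ ^ 2 = 1)
    (hw : ∑ x, ‖w x‖ ^ 2 = 1)
    (h1 : ∑ x, ∑ y, (starRingEnd ℂ) (u x) * (D x y : ℂ) * w y = 1) :
    (∀ x y, u x * (Real.sqrt (P x y) : ℂ) = w y * (Real.sqrt (pi x * P x y / pi y) : ℂ)) ∧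
    (∀ x y, 0 < P x y → u x * (Real.sqrt (pi y) : ℂ) = w y * (Real.sqrt (pi x) : ℂ)) :=
  discriminant_cauchy_schwarz_equality_general P pi hP_nonneg hP_row hpi_pos hpi_stat D hD u w hu hw
    h1
end

section
/- Suppose P is irreducible (for all x, y ∈ X there exists k ∈ ℕ with (P^k)_{xy} > 0). If u : X → ℂ satisfies u_x · √(π_y) = u_y · √(π_x) for every pair x, y ∈ X with p_{xy} > 0, then there exists c ∈ ℂ such that u_x = c·√(π_x) for every x ∈ X; that is, u is proportional to the vector (√(π_x))_{x∈X}. -/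
/-!
Dividing by `√π` turns the hypothesis into: `v x := u x / √(π x)` takes the same value at the two
ends of every edge `x ⟶ y` with `p_{xy} > 0`. A positive entry of `P ^ k` is a path of such edges,
so by irreducibility `v` is constant.
-/

namespace Matrix

variable {n R α : Type*} [Ring R] [LinearOrder R]

theorem apply_eq_of_path {A : Matrix n n R} {f : n → α} (hf : ∀ i j, 0 < A i j → f i = f j)
    {i j : n} (p : @Quiver.Path n A.toQuiver i j) : f i = f j := by
  induction p with
  | nil => rfl
  | cons _ e ih => exact ih.trans (hf _ _ e.down)

theorem apply_eq_of_pow_apply_pos_s3 [Fintype n] [DecidableEq n] [IsOrderedRing R]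
    [PosMulStrictMono R] [Nontrivial R] {A : Matrix n n R} (hA : ∀ i j, 0 ≤ A i j)
    {f : n → α} (hf : ∀ i j, 0 < A i j → f i = f j) {k : ℕ} {i j : n}
    (h : 0 < (A ^ k) i j) : f i = f j := by
  obtain ⟨⟨p, -⟩⟩ := (pow_apply_pos_iff_nonempty_path hA k i j).mp h
  exact apply_eq_of_path hf p

end Matrix

theorem proportional_of_local_relation_general {X : Type*} [Fintype X] [DecidableEq X] [Nonempty X]
    (P : Matrix X X ℝ) (pi : X → ℝ)
    (hP_nonneg : ∀ x y, 0 ≤ P x y)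
    (hpi_pos : ∀ x, 0 < pi x)
    (hirr : ∀ x y, ∃ k : ℕ, 0 < (P ^ k) x y)
    (u : X → ℂ)
    (hu : ∀ x y, 0 < P x y → u x * (Real.sqrt (pi y) : ℂ) = u y * (Real.sqrt (pi x) : ℂ)) :
    ∃ c : ℂ, ∀ x, u x = c * (Real.sqrt (pi x) : ℂ) := by
  have hsqrt : ∀ x, (Real.sqrt (pi x) : ℂ) ≠ 0 := fun x => by
    exact_mod_cast (Real.sqrt_pos.mpr (hpi_pos x)).ne'
  set v : X → ℂ := fun x => u x / Real.sqrt (pi x)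
  have hv : ∀ x y, 0 < P x y → v x = v y := fun x y h =>
    (div_eq_div_iff (hsqrt x) (hsqrt y)).mpr (hu x y h)
  obtain ⟨x₀⟩ := ‹Nonempty X›
  refine ⟨v x₀, fun x => ?_⟩
  obtain ⟨k, hk⟩ := hirr x₀ x
  rw [Matrix.apply_eq_of_pow_apply_pos_s3 hP_nonneg hv hk, div_mul_cancel₀ _ (hsqrt x)]

/-- For an irreducible row-stochastic matrix `P` with stationary
distribution `π`, any `u : X → ℂ` with `u x * √(π y) = u y * √(π x)` whenever
`P x y > 0` is proportional to the vector `(√(π x))ₓ`. -/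
theorem proportional_of_local_relation {X : Type*} [Fintype X] [DecidableEq X] [Nonempty X]
    (P : Matrix X X ℝ) (pi : X → ℝ)
    (hP_nonneg : ∀ x y, 0 ≤ P x y)
    (hP_row : ∀ x, ∑ y, P x y = 1)
    (hpi_pos : ∀ x, 0 < pi x)
    (hpi_sum : ∑ x, pi x = 1)
    (hpi_stat : ∀ y, ∑ x, pi x * P x y = pi y)
    (hirr : ∀ x y, ∃ k : ℕ, 0 < (P ^ k) x y)
    (u : X → ℂ)
    (hu : ∀ x y, 0 < P x y → u x * (Real.sqrt (pi y) : ℂ) = u y * (Real.sqrt (pi x) : ℂ)) :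
    ∃ c : ℂ, ∀ x, u x = c * (Real.sqrt (pi x) : ℂ) :=
  proportional_of_local_relation_general P pi hP_nonneg hpi_pos hirr u hu
end

section
/- Let a ∈ A and b ∈ B be unit vectors and let θ ∈ (0, π/2) be such that the orthogonal projections satisfy Π_A b = cos θ · a and Π_B a = cos θ · b (a matched pair of singular vectors with singular value cos θ ∈ (0,1)). Then the vector a − e^{iθ}·b is nonzero and is an eigenvector of W = ref(B) ∘ ref(A) with eigenvalue e^{2iθ}: (ref(B) ∘ ref(A))(a − e^{iθ}·b) = e^{2iθ}·(a − e^{iθ}·b). In particular e^{2iθ} is an eigenvalue of W with nonzero imaginary part. -/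
open Complex

/-!
On the span of `a` and `b`, each reflection acts through the single coefficient `c = cos θ`:
`ref(A) (x a + y b) = (x + 2 c y) a - y b`, and symmetrically for `B`. Composing the two, the vector
`a - e b` is an eigenvector with eigenvalue `e²` exactly when `e² + 1 = 2 c e`, which
`e = e^{iθ}` satisfies since `2 cos θ = e^{iθ} + e^{-iθ}`. It is nonzero because otherwise
`Π_B a = e b` would force `e^{iθ} = cos θ`, which fails as `sin θ ≠ 0`.
-/

namespace Submodule

variable {𝕜 E : Type*} [RCLike 𝕜] [NormedAddCommGroup E] [InnerProductSpace 𝕜 E]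
  {K : Submodule 𝕜 E} [K.HasOrthogonalProjection]

theorem reflection_smul_add_smul_of_starProjection_eq {a b : E} {c : 𝕜} (ha : a ∈ K)
    (hb : K.starProjection b = c • a) (x y : 𝕜) :
    K.reflection (x • a + y • b) = (x + 2 * c * y) • a - y • b := by
  rw [reflection_apply, map_add, map_smul, map_smul, starProjection_eq_self_iff.mpr ha, hb]
  module

theorem sub_smul_ne_zero_of_starProjection_eq {a b : E} {c e : 𝕜} (hb : b ∈ K) (hb0 : b ≠ 0)
    (hab : K.starProjection a = c • b) (hec : e ≠ c) : a - e • b ≠ 0 := by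
  intro h
  rw [sub_eq_zero.mp h, map_smul, starProjection_eq_self_iff.mpr hb] at hab
  exact hec (smul_left_injective 𝕜 hb0 hab)

theorem reflection_reflection_sub_smul {A B : Submodule 𝕜 E} [A.HasOrthogonalProjection]
    [B.HasOrthogonalProjection] {a b : E} {c e : 𝕜} (ha : a ∈ A) (hb : b ∈ B)
    (hPA : A.starProjection b = c • a) (hPB : B.starProjection a = c • b)
    (he : e ^ 2 + 1 = 2 * c * e) :
    B.reflection (A.reflection (a - e • b)) = e ^ 2 • (a - e • b) := by
  rw [show a - e • b = (1 : 𝕜) • a + (-e) • b by module,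
    reflection_smul_add_smul_of_starProjection_eq ha hPA,
    show (1 + 2 * c * -e) • a - (-e) • b = e • b + (1 - 2 * c * e) • a by module,
    reflection_smul_add_smul_of_starProjection_eq hb hPB]
  linear_combination (norm := module) he • ((e + 2 * c) • b - a)

end Submodule

theorem two_mul_cos_mul_exp_mul_I (θ : ℝ) :
    2 * (Real.cos θ : ℂ) * exp (θ * I) = exp (θ * I) ^ 2 + 1 := by
  rw [ofReal_cos, cos, neg_mul, exp_neg]
  field_simp

theorem quantum_walk_eigenvector_general {H : Type*} [NormedAddCommGroup H] [InnerProductSpace ℂ H]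
    (A B : Submodule ℂ H) [Submodule.HasOrthogonalProjection A] [Submodule.HasOrthogonalProjection B]
    (a b : H) (ha : a ∈ A) (hb : b ∈ B) (hnb : ‖b‖ = 1)
    (θ : ℝ) (hθ : θ ∈ Set.Ioo 0 (Real.pi / 2))
    (hPA : (Submodule.orthogonalProjectionOnto A b : H) = (Real.cos θ : ℂ) • a)
    (hPB : (Submodule.orthogonalProjectionOnto B a : H) = (Real.cos θ : ℂ) • b) :
    a - Complex.exp (θ * Complex.I) • b ≠ 0 ∧
      Submodule.reflection B (Submodule.reflection A (a - Complex.exp (θ * Complex.I) • b)) =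
        Complex.exp (2 * θ * Complex.I) • (a - Complex.exp (θ * Complex.I) • b) := by
  have hsin : Real.sin θ ≠ 0 :=
    (Real.sin_pos_of_pos_of_lt_pi hθ.1 (hθ.2.trans (half_lt_self Real.pi_pos))).ne'
  have hexp_ne_cos : exp (θ * I) ≠ (Real.cos θ : ℂ) := fun h ↦ hsin <| by
    simpa [exp_ofReal_mul_I_im] using congrArg im h
  have hexp_sq : exp (2 * θ * I) = exp (θ * I) ^ 2 := by
    rw [← exp_nat_mul]; push_cast; ring_nf
  have hb0 : b ≠ 0 := norm_ne_zero_iff.mp (hnb ▸ one_ne_zero)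
  refine ⟨Submodule.sub_smul_ne_zero_of_starProjection_eq hb hb0 hPB hexp_ne_cos, ?_⟩
  rw [hexp_sq]
  exact Submodule.reflection_reflection_sub_smul ha hb hPA hPB (two_mul_cos_mul_exp_mul_I θ).symm

/-- For a matched pair of singular vectors `a ∈ A`, `b ∈ B` with
singular value `cos θ`, `θ ∈ (0, π/2)`, the vector `a − e^{iθ}·b` is a nonzero
eigenvector of `W = ref(B) ∘ ref(A)` with eigenvalue `e^{2iθ}`. -/
theorem quantum_walk_eigenvector {H : Type*} [NormedAddCommGroup H] [InnerProductSpace ℂ H]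
    (A B : Submodule ℂ H) [Submodule.HasOrthogonalProjection A] [Submodule.HasOrthogonalProjection B]
    (a b : H) (ha : a ∈ A) (hb : b ∈ B) (hna : ‖a‖ = 1) (hnb : ‖b‖ = 1)
    (θ : ℝ) (hθ : θ ∈ Set.Ioo 0 (Real.pi / 2))
    (hPA : (Submodule.orthogonalProjectionOnto A b : H) = (Real.cos θ : ℂ) • a)
    (hPB : (Submodule.orthogonalProjectionOnto B a : H) = (Real.cos θ : ℂ) • b) :
    a - Complex.exp (θ * Complex.I) • b ≠ 0 ∧
      Submodule.reflection B (Submodule.reflection A (a - Complex.exp (θ * Complex.I) • b)) =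
        Complex.exp (2 * θ * Complex.I) • (a - Complex.exp (θ * Complex.I) • b) :=
  quantum_walk_eigenvector_general A B a b ha hb hnb θ hθ hPA hPB
end

section
/- Let μ ∈ M and ν ∈ M^⊥ be unit vectors, let θ ∈ ℝ, and set φ = (sin θ)·μ + (cos θ)·ν. Then the perfect amplitude amplification step triples the angle: (2⟨φ,·⟩φ − Id)((Id − 2Π_M) φ) = (sin 3θ)·μ + (cos 3θ)·ν, where 2⟨φ,·⟩φ − Id denotes the map x ↦ 2⟨φ, x⟩·φ − x (reflection through the line spanned by φ). -/
open Real

/-! The map `Id − 2Π_M` fixes `ν` and negates `μ`, so it sends `φ` at angle `θ` to the vector at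
angle `−θ`; the two are at angle `2θ`, so `⟨φ, (Id − 2Π_M) φ⟩ = cos 2θ`, and reflecting through
the line of `φ` then lands at angle `θ + 2θ = 3θ`. -/

namespace Submodule

variable {𝕜 H : Type*} [RCLike 𝕜] [NormedAddCommGroup H] [InnerProductSpace 𝕜 H]
  (K : Submodule 𝕜 H) [K.HasOrthogonalProjection]

theorem add_sub_two_smul_starProjection_add {u v : H} (hu : u ∈ K) (hv : v ∈ Kᗮ) :
    u + v - (2 : 𝕜) • K.starProjection (u + v) = v - u := by
  rw [K.eq_starProjection_of_mem_orthogonal' hu hv rfl, two_smul]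
  abel

end Submodule

section OrthonormalPair

variable {𝕜 H : Type*} [RCLike 𝕜] [NormedAddCommGroup H] [InnerProductSpace 𝕜 H]

theorem inner_ofReal_smul_add_ofReal_smul {u v : H} (hu : ‖u‖ = 1) (hv : ‖v‖ = 1)
    (huv : inner 𝕜 u v = 0) (a b c d : ℝ) :
    inner 𝕜 ((a : 𝕜) • u + (b : 𝕜) • v) ((c : 𝕜) • u + (d : 𝕜) • v) = ((a * c + b * d : ℝ) : 𝕜) := by
  have hvu : inner 𝕜 v u = 0 := by rw [← inner_conj_symm, huv, map_zero]
  simp only [inner_add_left, inner_add_right, inner_smul_left, inner_smul_right,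
    inner_self_eq_norm_sq_to_K, hu, hv, huv, hvu, RCLike.conj_ofReal]
  push_cast
  ring

end OrthonormalPair

theorem Real.sin_three_mul_eq_mul_sin (x : ℝ) : sin (3 * x) = (2 * cos (2 * x) + 1) * sin x := by
  rw [sin_three_mul, cos_two_mul, cos_sq']
  ring

theorem Real.cos_three_mul_eq_mul_cos (x : ℝ) : cos (3 * x) = (2 * cos (2 * x) - 1) * cos x := by
  rw [cos_three_mul, cos_two_mul]
  ring

/-- The perfect amplitude amplification step triples the angle:
with `φ = sin θ·μ + cos θ·ν` (`μ ∈ M`, `ν ∈ Mᗮ` unit vectors),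
`ref(φ)((Id − 2Π_M) φ) = sin 3θ·μ + cos 3θ·ν`. -/
theorem amplitude_amplification_triples_angle {H : Type*} [NormedAddCommGroup H]
    [InnerProductSpace ℂ H]
    (M : Submodule ℂ H) [M.HasOrthogonalProjection]
    (μ ν : H) (hμ : μ ∈ M) (hν : ν ∈ Mᗮ) (hμ1 : ‖μ‖ = 1) (hν1 : ‖ν‖ = 1)
    (θ : ℝ) (f : H)
    (hf : f = (Real.sin θ : ℂ) • μ + (Real.cos θ : ℂ) • ν)
    (g : H) (hg : g = f - (2 : ℂ) • (M.orthogonalProjectionOnto f : H)) :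
    (2 * (inner ℂ f g : ℂ)) • f - g =
      (Real.sin (3 * θ) : ℂ) • μ + (Real.cos (3 * θ) : ℂ) • ν := by
  have hg' : g = ((-sin θ : ℝ) : ℂ) • μ + (cos θ : ℂ) • ν := by
    rw [hg, Submodule.coe_orthogonalProjectionOnto_apply, hf,
      M.add_sub_two_smul_starProjection_add (M.smul_mem _ hμ) (Mᗮ.smul_mem _ hν)]
    push_cast
    module
  have hfg : inner ℂ f g = (cos (2 * θ) : ℂ) := by
    have h := inner_ofReal_smul_add_ofReal_smul (𝕜 := ℂ) hμ1 hν1 (hν μ hμ)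
      (sin θ) (cos θ) (-sin θ) (cos θ)
    rw [RCLike.ofReal_eq_complex_ofReal] at h
    rw [hf, hg', h, cos_two_mul']
    congr 1
    ring
  rw [hfg, hf, hg', sin_three_mul_eq_mul_sin, cos_three_mul_eq_mul_cos]
  push_cast
  module
end

section
/- Let φ₀ > 0 and γ > 0, set φ̄_i = 3^i·φ₀, and β_i = (18/(4π³))·γ/i² for i ≥ 1. Define ẽ_0 = 0 and ẽ_{i+1} = 4β_{i+1}·φ̄_i + 3ẽ_i. Then for every i ≥ 0, ẽ_i ≤ (γ/π)·3^i·φ₀. (The proof uses Σ_{j≥1} 1/j² = π²/6, so that the normalized errors u_i = ẽ_i/(γ·φ̄_i) satisfy u_i = (4/(3γ))·Σ_{j=1}^i β_j ≤ 1/π.) -/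
/-! Dividing by `3 ^ i` turns the recurrence into a telescoping sum, so `ẽ_i` is `3 ^ i` times a
partial sum of `∑ 1 / j ^ 2` up to a constant; bounding that partial sum by `ζ(2) = π ^ 2 / 6`
gives exactly the constant `γ / π`. -/

open Finset Real

theorem mul_eq_pow_mul_sum_of_succ_eq {e c : ℕ → ℝ} {r : ℝ} (h0 : e 0 = 0)
    (hrec : ∀ i, e (i + 1) = c i * r ^ i + r * e i) (i : ℕ) :
    r * e i = r ^ i * ∑ j ∈ range i, c j := by
  induction i with
  | zero => simp [h0]
  | succ n ih => rw [hrec, sum_range_succ, mul_add, ← mul_assoc, ih]; ring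

theorem sum_range_one_div_succ_sq_le (n : ℕ) :
    ∑ j ∈ range n, 1 / ((j : ℝ) + 1) ^ 2 ≤ π ^ 2 / 6 := by
  have hzeta : HasSum (fun j : ℕ => 1 / ((j : ℝ) + 1) ^ 2) (π ^ 2 / 6) := by
    simpa using (hasSum_nat_add_iff' 1).mpr hasSum_zeta_two
  exact hzeta.summable.sum_le_tsum _ (fun j _ => by positivity) |>.trans_eq hzeta.tsum_eq

/-- With `φ̄_i = 3^i·φ₀` and `β_i = (18/(4π³))·γ/i²`, the majorant
errors `ẽ_0 = 0`, `ẽ_{i+1} = 4β_{i+1}·φ̄_i + 3ẽ_i` satisfy `ẽ_i ≤ (γ/π)·3^i·φ₀`. -/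
theorem majorant_error_bound (φ₀ γ : ℝ) (hφ₀ : 0 < φ₀) (hγ : 0 < γ)
    (et : ℕ → ℝ) (h0 : et 0 = 0)
    (hrec : ∀ i : ℕ, et (i + 1) =
      4 * (18 / (4 * Real.pi ^ 3) * γ / ((i : ℝ) + 1) ^ 2) * ((3 : ℝ) ^ i * φ₀)
        + 3 * et i) :
    ∀ i : ℕ, et i ≤ γ / Real.pi * ((3 : ℝ) ^ i * φ₀) := by
  intro i
  have hclosed := mul_eq_pow_mul_sum_of_succ_eq (r := 3) h0
    (fun i => by rw [hrec, mul_comm ((3 : ℝ) ^ i), ← mul_assoc]) i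
  have hsum : ∑ j ∈ range i, 4 * (18 / (4 * π ^ 3) * γ / ((j : ℝ) + 1) ^ 2) * φ₀
      = 18 * γ * φ₀ / π ^ 3 * ∑ j ∈ range i, 1 / ((j : ℝ) + 1) ^ 2 := by
    rw [mul_sum]
    refine sum_congr rfl fun j _ => ?_
    field_simp
  calc et i = 3 ^ i * (18 * γ * φ₀ / π ^ 3 * ∑ j ∈ range i, 1 / ((j : ℝ) + 1) ^ 2) / 3 := by
        rw [← hsum, ← hclosed]; ring
    _ ≤ 3 ^ i * (18 * γ * φ₀ / π ^ 3 * (π ^ 2 / 6)) / 3 := by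
        gcongr
        exact sum_range_one_div_succ_sq_le i
    _ = γ / π * (3 ^ i * φ₀) := by field_simp; ring
end

section
/- Let μ and ν be orthonormal vectors in H, let φ ∈ ℝ, and set π_φ = (sin φ)·μ + (cos φ)·ν. Let R_ν = 2⟨ν,·⟩ν − Id and R_π = 2⟨π_φ,·⟩π_φ − Id be the reflections through the lines spanned by ν and by π_φ, and let G = R_π ∘ R_ν. Then for every natural number n, G^n(π_φ) = (sin((2n+1)φ))·μ + (cos((2n+1)φ))·ν; i.e., each Grover iteration rotates the state by angle 2φ in the plane spanned by μ and ν. -/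
/-!
On the unit circle `c θ = sin θ • μ + cos θ • ν` of the plane spanned by `μ` and `ν`, the
reflection through the line of `c ψ` is `c θ ↦ c (2ψ - θ)`. Since `ν = c 0` and `π_φ = c φ`,
the Grover step `G` maps `c θ` to `c (θ + 2φ)`; iterating from `c φ` gives the claim.
-/

noncomputable section

variable {H : Type*} [NormedAddCommGroup H] [InnerProductSpace ℂ H]

def lineReflection (w x : H) : H := (2 * inner ℂ w x) • w - x

def circlePoint (μ ν : H) (θ : ℝ) : H := (Real.sin θ : ℂ) • μ + (Real.cos θ : ℂ) • ν

section Orthonormal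

variable {μ ν : H} (hμ : ‖μ‖ = 1) (hν : ‖ν‖ = 1) (hμν : inner ℂ μ ν = 0)
include hμ hν hμν

theorem inner_circlePoint (ψ θ : ℝ) :
    inner ℂ (circlePoint μ ν ψ) (circlePoint μ ν θ) = (Real.cos (θ - ψ) : ℂ) := by
  have hνμ : inner ℂ ν μ = 0 := by rw [← inner_conj_symm, hμν, map_zero]
  simp only [circlePoint, inner_add_left, inner_add_right, inner_smul_left, inner_smul_right,
    inner_self_eq_norm_sq_to_K, hμ, hν, hμν, hνμ, Complex.conj_ofReal, Real.cos_sub]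
  push_cast
  ring

theorem lineReflection_circlePoint (ψ θ : ℝ) :
    lineReflection (circlePoint μ ν ψ) (circlePoint μ ν θ) = circlePoint μ ν (2 * ψ - θ) := by
  rw [lineReflection, inner_circlePoint hμ hν hμν]
  simp only [circlePoint, smul_add, smul_smul]
  have hsin : Real.sin (2 * ψ - θ) = 2 * Real.cos (θ - ψ) * Real.sin ψ - Real.sin θ := by
    rw [Real.sin_sub, Real.cos_sub, Real.sin_two_mul, Real.cos_two_mul]
    linear_combination (-2 * Real.sin θ) * Real.sin_sq_add_cos_sq ψ
  have hcos : Real.cos (2 * ψ - θ) = 2 * Real.cos (θ - ψ) * Real.cos ψ - Real.cos θ := by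
    rw [Real.cos_sub, Real.cos_sub, Real.sin_two_mul, Real.cos_two_mul]
    ring
  rw [hsin, hcos]
  push_cast
  match_scalars <;> ring

end Orthonormal

end

/-- Each Grover iteration `G = ref(π_φ) ∘ ref(ν)` rotates the state
by angle `2φ` in the plane spanned by the orthonormal vectors `μ` and `ν`:
`G^n(π_φ) = sin((2n+1)φ)·μ + cos((2n+1)φ)·ν`. -/
theorem grover_rotation {H : Type*} [NormedAddCommGroup H] [InnerProductSpace ℂ H]
    (μ ν : H) (hμ1 : ‖μ‖ = 1) (hν1 : ‖ν‖ = 1) (horth : (inner ℂ μ ν : ℂ) = 0)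
    (φ : ℝ) (p : H)
    (hp : p = (Real.sin φ : ℂ) • μ + (Real.cos φ : ℂ) • ν)
    (G : H → H)
    (hG : ∀ x : H, G x =
      (2 * (inner ℂ p ((2 * (inner ℂ ν x : ℂ)) • ν - x) : ℂ)) • p -
        ((2 * (inner ℂ ν x : ℂ)) • ν - x)) :
    ∀ n : ℕ, G^[n] p =
      (Real.sin ((2 * n + 1) * φ) : ℂ) • μ + (Real.cos ((2 * n + 1) * φ) : ℂ) • ν := by
  have hRν (θ : ℝ) : lineReflection ν (circlePoint μ ν θ) = circlePoint μ ν (-θ) := by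
    have hν : circlePoint μ ν 0 = ν := by simp [circlePoint]
    simpa [hν] using lineReflection_circlePoint hμ1 hν1 horth 0 θ
  replace hp : p = circlePoint μ ν φ := hp
  subst hp
  have hstep : Function.Semiconj (circlePoint μ ν) (· + 2 * φ) G := fun θ => by
    change circlePoint μ ν (θ + 2 * φ) = G _
    rw [hG]
    change _ = lineReflection _ (lineReflection ν _)
    rw [hRν, lineReflection_circlePoint hμ1 hν1 horth, sub_neg_eq_add, add_comm]
  intro n
  rw [← (hstep.iterate_right n) φ, add_right_iterate_apply, nsmul_eq_mul, circlePoint,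
    show φ + n * (2 * φ) = (2 * n + 1) * φ by ring]
end
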